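/- arXiv:2412.11522 — 2 statements merged into one kernel-verified Lean document; each statement's English description precedes it below -/
import Mathlib

section
/- If G is block Hankel and α ∈ ℂ with Im α > 0, then the p×p matrix F(λ)ΓF(α)* is invertible for every λ ∈ ℂ with Im λ ≥ 0. -/
open Matrix Complex
open scoped ComplexConjugate ComplexOrder

noncomputable section

/-- Index type for `ℂ^m` with `m = (n+1)p`, viewed as `n+1` blocks of size `p`. -/
abbrev Idx (n p : ℕ) : Type := Fin (n + 1) × Fin p

/-- The `p × m` matrix polynomial `F(λ) = [I_p, λI_p, …, λ^n I_p]`. -/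
def Fm (n p : ℕ) (lam : ℂ) : Matrix (Fin p) (Idx n p) ℂ :=
  Matrix.of fun i jk => lam ^ (jk.1 : ℕ) * (if jk.2 = i then 1 else 0)

/-- The `m × p` matrix `e_k` whose `k`-th block is `I_p` and other blocks are `0`. -/
def Ek (n p : ℕ) (k : Fin (n + 1)) : Matrix (Idx n p) (Fin p) ℂ :=
  Matrix.of fun jl i => if jl.1 = k ∧ jl.2 = i then 1 else 0

/-- The nilpotent block shift matrix `A` with blocks `A_{ij} = I_p` iff `j = i+1`. -/
def Am (n p : ℕ) : Matrix (Idx n p) (Idx n p) ℂ :=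
  Matrix.of fun ia jb => if (jb.1 : ℕ) = (ia.1 : ℕ) + 1 ∧ ia.2 = jb.2 then 1 else 0

/-- `G` is block Hankel: `g_{i+1,j} = g_{i,j+1}` for `0 ≤ i,j ≤ n−1`. -/
def BlockHankel (n p : ℕ) (G : Matrix (Idx n p) (Idx n p) ℂ) : Prop :=
  ∀ (i j : Fin n) (a b : Fin p),
    G (i.succ, a) (j.castSucc, b) = G (i.castSucc, a) (j.succ, b)

/-!
If `F(λ)ΓF(α)*η = 0` with `η ≠ 0`, then `d = ΓF(α)*η` is nonzero, satisfies
`⟨x, d⟩_G = (F(α)x)*η` for all `x`, and `F(λ)d = 0`. The last condition makes every column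
polynomial of `d` divisible by `z - λ`: `d = s - λe`, where `e` and `s` are the coefficient vectors
of some `h(z)` and `z h(z)`. The Hankel property makes `⟨e, s⟩_G` real, hence
`Im ⟨e, d⟩_G = -Im λ ⟨e, e⟩_G`, while `0 < ⟨d, d⟩_G = conj(α - λ) ⟨e, d⟩_G`. Combined with
Cauchy–Schwarz for `⟨e, d⟩_G` this gives `⟨d, d⟩_G Im α = Im λ (⟨d, d⟩_G - |α - λ|² ⟨e, e⟩_G) ≤ 0`.
-/

section Coeffs

open Polynomial

variable {n p : ℕ}

-- For `h` of degree `< n`, the coefficient vectors of `z h(z)` and of `h(z)`.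
def shiftCoeffs (h : Fin n × Fin p → ℂ) : Idx n p → ℂ :=
  fun ja => (Fin.cons 0 fun i => h (i, ja.2) : Fin (n + 1) → ℂ) ja.1

def embedCoeffs (h : Fin n × Fin p → ℂ) : Idx n p → ℂ :=
  fun ja => (Fin.snoc (fun i => h (i, ja.2)) 0 : Fin (n + 1) → ℂ) ja.1

lemma star_shiftCoeffs (h : Fin n × Fin p → ℂ) : star (shiftCoeffs h) = shiftCoeffs (star h) := by
  ext ⟨j, a⟩
  cases j using Fin.cases <;> simp [shiftCoeffs]

lemma star_embedCoeffs (h : Fin n × Fin p → ℂ) : star (embedCoeffs h) = embedCoeffs (star h) := by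
  ext ⟨j, a⟩
  cases j using Fin.lastCases <;> simp [embedCoeffs]

lemma dotProduct_shiftCoeffs (v : Idx n p → ℂ) (h : Fin n × Fin p → ℂ) :
    v ⬝ᵥ shiftCoeffs h = ∑ ia : Fin n × Fin p, v (ia.1.succ, ia.2) * h ia := by
  simp [dotProduct, shiftCoeffs, Fintype.sum_prod_type, Fin.sum_univ_succ]

lemma dotProduct_embedCoeffs (v : Idx n p → ℂ) (h : Fin n × Fin p → ℂ) :
    v ⬝ᵥ embedCoeffs h = ∑ ia : Fin n × Fin p, v (ia.1.castSucc, ia.2) * h ia := by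
  simp [dotProduct, embedCoeffs, Fintype.sum_prod_type, Fin.sum_univ_castSucc]

lemma Fm_mulVec_apply (z : ℂ) (x : Idx n p → ℂ) (a : Fin p) :
    (Fm n p z *ᵥ x) a = ∑ j : Fin (n + 1), z ^ (j : ℕ) * x (j, a) := by
  simp [Matrix.mulVec, dotProduct, Fm, Fintype.sum_prod_type]

lemma Fm_apply_succ (z : ℂ) (a : Fin p) (i : Fin n) (b : Fin p) :
    Fm n p z a (i.succ, b) = z * Fm n p z a (i.castSucc, b) := by
  simp [Fm, pow_succ']

lemma Fm_mulVec_shiftCoeffs (z : ℂ) (h : Fin n × Fin p → ℂ) :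
    Fm n p z *ᵥ shiftCoeffs h = z • (Fm n p z *ᵥ embedCoeffs h) := by
  ext a
  simp only [mulVec, dotProduct_shiftCoeffs, dotProduct_embedCoeffs, Fm_apply_succ, mul_assoc,
    ← Finset.mul_sum, Pi.smul_apply, smul_eq_mul]

lemma Fm_mul_Ek_zero (z : ℂ) : Fm n p z * Ek n p 0 = 1 := by
  ext a b
  simp [Matrix.mul_apply, Fm, Ek, Fintype.sum_prod_type, Matrix.one_apply, ite_and, eq_comm]

lemma eq_zero_of_Fm_conjTranspose_mulVec_eq_zero {z : ℂ} {η : Fin p → ℂ}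
    (h : (Fm n p z)ᴴ *ᵥ η = 0) : η = 0 := by
  simpa [mulVec_mulVec, ← conjTranspose_mul, Fm_mul_Ek_zero] using
    congrArg ((Ek n p 0)ᴴ *ᵥ ·) h

lemma BlockHankel.dotProduct_embedCoeffs_mulVec_shiftCoeffs {G : Matrix (Idx n p) (Idx n p) ℂ}
    (hG : BlockHankel n p G) (x y : Fin n × Fin p → ℂ) :
    star (embedCoeffs x) ⬝ᵥ (G *ᵥ shiftCoeffs y) = star (shiftCoeffs x) ⬝ᵥ (G *ᵥ embedCoeffs y) := by
  rw [star_embedCoeffs, star_shiftCoeffs, dotProduct_comm, dotProduct_embedCoeffs, dotProduct_comm,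
    dotProduct_shiftCoeffs]
  rw [BlockHankel] at hG
  simp only [mulVec, dotProduct_shiftCoeffs, dotProduct_embedCoeffs, hG]

lemma shiftCoeffs_coeff (q : Fin p → ℂ[X]) (j : Fin (n + 1)) (a : Fin p) :
    shiftCoeffs (fun ia => (q ia.2).coeff ia.1) (j, a) = (X * q a).coeff j := by
  cases j using Fin.cases <;> simp [shiftCoeffs, coeff_X_mul]

lemma embedCoeffs_coeff (q : Fin p → ℂ[X]) (hq : ∀ a, (q a).coeff n = 0) (j : Fin (n + 1))
    (a : Fin p) : embedCoeffs (fun ia => (q ia.2).coeff ia.1) (j, a) = (q a).coeff j := by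
  cases j using Fin.lastCases <;> simp [embedCoeffs, hq]

lemma exists_eq_shiftCoeffs_sub_smul_embedCoeffs {z : ℂ} {d : Idx n p → ℂ}
    (hd : Fm n p z *ᵥ d = 0) : ∃ h, d = shiftCoeffs h - z • embedCoeffs h := by
  let P : Fin p → ℂ[X] := fun a => ∑ j : Fin (n + 1), C (d (j, a)) * X ^ (j : ℕ)
  have hP_coeff (j : Fin (n + 1)) (a : Fin p) : (P a).coeff j = d (j, a) := by
    simp [P, finsetSum_coeff, Fin.val_inj]
  have hP_deg (a : Fin p) : (P a).natDegree ≤ n := by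
    refine natDegree_sum_le_of_forall_le _ _ fun j _ => (natDegree_C_mul_X_pow_le _ _).trans ?_
    omega
  have hP_root (a : Fin p) : (P a).IsRoot z := by
    rw [IsRoot, eval_finsetSum, ← Pi.zero_apply (M := fun _ => ℂ) a, ← hd, Fm_mulVec_apply]
    simp only [eval_mul, eval_C, eval_pow, eval_X, mul_comm]
  let q : Fin p → ℂ[X] := fun a => P a /ₘ (X - C z)
  have hq (a : Fin p) : (q a).coeff n = 0 := by
    have hroot := mul_divByMonic_eq_iff_isRoot.2 (hP_root a)
    rcases eq_or_ne (q a) 0 with hq0 | hq0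
    · simp [hq0]
    refine coeff_eq_zero_of_natDegree_lt ?_
    have := congrArg natDegree hroot
    rw [natDegree_mul (X_sub_C_ne_zero z) hq0, natDegree_X_sub_C] at this
    have := hP_deg a
    omega
  refine ⟨fun ia => (q ia.2).coeff ia.1, funext fun ⟨j, a⟩ => ?_⟩
  rw [Pi.sub_apply, Pi.smul_apply, shiftCoeffs_coeff, embedCoeffs_coeff q hq, ← hP_coeff,
    ← mul_divByMonic_eq_iff_isRoot.2 (hP_root a)]
  simp [sub_mul, q]

end Coeffs

section HermitianForm

variable {ι : Type*} [Fintype ι] {G : Matrix ι ι ℂ}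

lemma Matrix.IsHermitian.star_dotProduct_mulVec (hG : G.IsHermitian) (x y : ι → ℂ) :
    star (star x ⬝ᵥ (G *ᵥ y)) = star y ⬝ᵥ (G *ᵥ x) := by
  rw [star_dotProduct, star_mulVec, hG.eq, star_star, ← dotProduct_mulVec]

lemma Matrix.PosSemidef.normSq_dotProduct_mulVec_le (hG : G.PosSemidef) (x y : ι → ℂ) :
    normSq (star x ⬝ᵥ (G *ᵥ y)) ≤ (star x ⬝ᵥ (G *ᵥ x)).re * (star y ⬝ᵥ (G *ᵥ y)).re := by
  let := G.toSeminormedAddCommGroup hG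
  let := G.toInnerProductSpace hG
  have key := inner_mul_inner_self_le (𝕜 := ℂ) x y
  rw [norm_inner_symm y x, ← sq, ← Complex.normSq_eq_norm_sq] at key
  rw [dotProduct_comm (star x), dotProduct_comm (star x), dotProduct_comm (star y)]
  exact key

lemma Matrix.PosDef.im_nonpos_of_symmetric_shift (hG : G.PosDef) {e s : ι → ℂ} {α lam : ℂ}
    (hsym : star e ⬝ᵥ (G *ᵥ s) = star s ⬝ᵥ (G *ᵥ e))
    (hs : star s ⬝ᵥ (G *ᵥ (s - lam • e)) = conj α * (star e ⬝ᵥ (G *ᵥ (s - lam • e))))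
    (hne : s - lam • e ≠ 0) (hlam : 0 ≤ lam.im) : α.im ≤ 0 := by
  set d := s - lam • e
  set w := star e ⬝ᵥ (G *ᵥ d)
  set N := star d ⬝ᵥ (G *ᵥ d)
  set P := star e ⬝ᵥ (G *ᵥ e)
  set z := α - lam
  have hN : N = conj z * w := by
    have hNs : N = star s ⬝ᵥ (G *ᵥ d) - conj lam * w := by
      simp only [N, d, star_sub, star_smul, sub_dotProduct, smul_dotProduct, Complex.star_def,
        smul_eq_mul]
      rfl
    rw [hNs, hs, map_sub]
    ring
  have hw : w = star e ⬝ᵥ (G *ᵥ s) - lam * P := by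
    simp only [w, d, P, mulVec_sub, mulVec_smul, dotProduct_sub, dotProduct_smul, smul_eq_mul]
  have hτ : (star e ⬝ᵥ (G *ᵥ s)).im = 0 := by
    rw [← Complex.conj_eq_iff_im, ← Complex.star_def, hG.isHermitian.star_dotProduct_mulVec, hsym]
  have hP : P.im = 0 := (Complex.nonneg_iff.1 (hG.posSemidef.dotProduct_mulVec_nonneg e)).2.symm
  have hNpos : 0 < N := hG.dotProduct_mulVec_pos hne
  obtain ⟨hN_re, hN_im⟩ := Complex.pos_iff.1 hNpos
  have hw_im : w.im = -(lam.im * P.re) := by simp [hw, hτ, hP]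
  have hcs : normSq w ≤ P.re * N.re := hG.posSemidef.normSq_dotProduct_mulVec_le e d
  have hN_sq : N.re * N.re = normSq z * normSq w := by
    rw [← normSq_conj z, ← normSq_mul, ← hN, normSq_apply, ← hN_im, mul_zero, add_zero]
  have hN_im' : N.re * z.im = normSq z * w.im := by
    have : z * N = normSq z * w := by rw [hN, ← mul_assoc, mul_conj]
    simpa [← hN_im, mul_comm] using congrArg Complex.im this
  have hle : N.re ≤ normSq z * P.re := by
    refine le_of_mul_le_mul_right ?_ hN_re
    nlinarith [mul_le_mul_of_nonneg_left hcs (normSq_nonneg z)]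
  have hz_im : z.im = α.im - lam.im := by simp [z]
  have key : N.re * α.im = lam.im * (N.re - normSq z * P.re) := by
    linear_combination hN_im' - N.re * hz_im + normSq z * hw_im
  nlinarith [mul_nonneg hlam (sub_nonneg.2 hle)]

end HermitianForm

theorem stmt16_general (p n : ℕ)
    (G : Matrix (Idx n p) (Idx n p) ℂ) (hG : G.PosDef) (hH : BlockHankel n p G)
    (α : ℂ) (hα : 0 < α.im) :
    ∀ lam : ℂ, 0 ≤ lam.im → IsUnit (Fm n p lam * G⁻¹ * (Fm n p α)ᴴ) := by
  intro lam hlam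
  rw [isUnit_iff_isUnit_det, isUnit_iff_ne_zero]
  intro hdet
  obtain ⟨η, hη, hMη⟩ := exists_mulVec_eq_zero_iff.2 hdet
  set d := G⁻¹ *ᵥ ((Fm n p α)ᴴ *ᵥ η)
  have hGd : G *ᵥ d = (Fm n p α)ᴴ *ᵥ η := by
    rw [mulVec_mulVec, mul_nonsing_inv _ ((isUnit_iff_isUnit_det G).1 hG.isUnit), one_mulVec]
  have hrep (x : Idx n p → ℂ) : star x ⬝ᵥ (G *ᵥ d) = star (Fm n p α *ᵥ x) ⬝ᵥ η := by
    rw [hGd, star_mulVec, dotProduct_mulVec]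
  have hd : d ≠ 0 := fun hd0 => hη <| eq_zero_of_Fm_conjTranspose_mulVec_eq_zero (z := α) <| by
    rw [← hGd, hd0, mulVec_zero]
  obtain ⟨h, hdh⟩ := exists_eq_shiftCoeffs_sub_smul_embedCoeffs (z := lam) (d := d) (by
    simpa only [d, mulVec_mulVec, Matrix.mul_assoc] using hMη)
  rw [hdh] at hd hrep
  refine hα.not_ge <| hG.im_nonpos_of_symmetric_shift
    (hH.dotProduct_embedCoeffs_mulVec_shiftCoeffs h h) ?_ hd hlam
  rw [hrep, hrep, Fm_mulVec_shiftCoeffs, star_smul, smul_dotProduct]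
  rfl

theorem stmt16 (p n : ℕ) (hp : 0 < p) (hn : 0 < n)
    (G : Matrix (Idx n p) (Idx n p) ℂ) (hG : G.PosDef) (hH : BlockHankel n p G)
    (α : ℂ) (hα : 0 < α.im) :
    ∀ lam : ℂ, 0 ≤ lam.im → IsUnit (Fm n p lam * G⁻¹ * (Fm n p α)ᴴ) :=
  stmt16_general p n G hG hH α hα

end
end

section
/- If G is block Toeplitz, then for every ω ∈ ℂ with |ω| ≤ 1 the m×m matrix I_m − ω N₀ G A is invertible, and Γe₀ · (F(ω)Γe₀)^{-1} = (I_m − ωA)(I_m − ω N₀ G A)^{-1} Γe₀ (e₀*Γe₀)^{-1}. -/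
open Matrix Complex
open scoped ComplexConjugate ComplexOrder

noncomputable section

/-- `G` is block Toeplitz: `g_{i+1,j+1} = g_{ij}` for `0 ≤ i,j ≤ n−1`. -/
def BlockToeplitz (n p : ℕ) (G : Matrix (Idx n p) (Idx n p) ℂ) : Prop :=
  ∀ (i j : Fin n) (a b : Fin p),
    G (i.succ, a) (j.succ, b) = G (i.castSucc, a) (j.castSucc, b)

/-- `N₀ = Γ − Γe₀(e₀*Γe₀)⁻¹e₀*Γ`. -/
def N0m (n p : ℕ) (G : Matrix (Idx n p) (Idx n p) ℂ) : Matrix (Idx n p) (Idx n p) ℂ :=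
  G⁻¹ - G⁻¹ * Ek n p 0 * ((Ek n p 0)ᴴ * G⁻¹ * Ek n p 0)⁻¹ * (Ek n p 0)ᴴ * G⁻¹

/-- `N_• = Γ − Γe_n(e_n*Γe_n)⁻¹e_n*Γ`. -/
def Nbm (n p : ℕ) (G : Matrix (Idx n p) (Idx n p) ℂ) : Matrix (Idx n p) (Idx n p) ℂ :=
  G⁻¹ - G⁻¹ * Ek n p (Fin.last n) * ((Ek n p (Fin.last n))ᴴ * G⁻¹ * Ek n p (Fin.last n))⁻¹ *
    (Ek n p (Fin.last n))ᴴ * G⁻¹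

/-!
Write `B = 1 - ωA`, `M = 1 - ωN₀GA`, `Γ = G⁻¹` and `c = e₀*Γe₀`. Since `F(ω)B = e₀*` and
`N₀G = 1 - Γe₀c⁻¹e₀*`, `N₀e₀ = 0`, the matrix `X = B⁻¹Γe₀` satisfies `MX = Γe₀c⁻¹F(ω)Γe₀`, so
everything reduces to the invertibility of `M`; it also makes `F(ω)Γe₀` invertible, since
`F(ω)Γe₀x = 0` forces `Xx = 0`, hence `Γe₀x = BXx = 0`.

If `Mv = 0`, put `w = Av`, so that `v = ωN₀Gw` and `e₀*v = 0`. The Toeplitz structure, in the form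
`A*GA = (1 - e₀e₀*)G(1 - e₀e₀*)`, gives `v*Gv = w*Gw`, while `(N₀G)*G(N₀G) = G - e₀c⁻¹e₀*` gives
`v*Gv = |ω|²(w*Gw - y*c⁻¹y)` with `y = e₀*w`. As `|ω| ≤ 1` and `c⁻¹ > 0`, this forces `y = 0`,
hence `N₀Gw = w`, `v = ωAv`, and `v = 0` because `A` is nilpotent.
-/

namespace Matrix

variable {𝕜 ι κ : Type*} [RCLike 𝕜] [Fintype ι]

lemma star_mulVec_dotProduct_mulVec_mulVec {ι' : Type*} [Fintype ι'] (M : Matrix ι ι' 𝕜)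
    (H : Matrix ι ι 𝕜) (w : ι' → 𝕜) :
    star (M *ᵥ w) ⬝ᵥ (H *ᵥ (M *ᵥ w)) = star w ⬝ᵥ ((Mᴴ * H * M) *ᵥ w) := by
  rw [star_mulVec, ← dotProduct_mulVec, mulVec_mulVec, mulVec_mulVec]

variable [DecidableEq ι] [Fintype κ] [DecidableEq κ]

/-- `N0m n p G` is `deflatedInv G (Ek n p 0)`. -/
def deflatedInv (G : Matrix ι ι 𝕜) (E : Matrix ι κ 𝕜) : Matrix ι ι 𝕜 :=
  G⁻¹ - G⁻¹ * E * (Eᴴ * G⁻¹ * E)⁻¹ * Eᴴ * G⁻¹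

variable {G : Matrix ι ι 𝕜} {E : Matrix ι κ 𝕜}

lemma PosDef.isUnit_det_conjTranspose_mul_inv_mul (hG : G.PosDef)
    (hE : Function.Injective E.mulVec) : IsUnit (Eᴴ * G⁻¹ * E).det :=
  (isUnit_iff_isUnit_det _).mp (hG.inv.conjTranspose_mul_mul_same hE).isUnit

lemma deflatedInv_mul_self (hc : IsUnit (Eᴴ * G⁻¹ * E).det) : deflatedInv G E * E = 0 := by
  rw [deflatedInv, Matrix.sub_mul, Matrix.mul_assoc _ Eᴴ G⁻¹, Matrix.mul_assoc _ (Eᴴ * G⁻¹) E,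
    Matrix.mul_assoc (G⁻¹ * E), nonsing_inv_mul _ hc, Matrix.mul_one, sub_self]

lemma conjTranspose_mul_deflatedInv (hc : IsUnit (Eᴴ * G⁻¹ * E).det) :
    Eᴴ * deflatedInv G E = 0 := by
  rw [deflatedInv, Matrix.mul_sub]
  simp only [← Matrix.mul_assoc]
  rw [mul_nonsing_inv _ hc, Matrix.one_mul, sub_self]

lemma deflatedInv_mul (hG : IsUnit G.det) :
    deflatedInv G E * G = 1 - G⁻¹ * E * (Eᴴ * G⁻¹ * E)⁻¹ * Eᴴ := by
  rw [deflatedInv, Matrix.sub_mul, nonsing_inv_mul _ hG, Matrix.mul_assoc _ G⁻¹ G,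
    nonsing_inv_mul _ hG, Matrix.mul_one]

lemma mul_deflatedInv_mul (hG : IsUnit G.det) :
    G * deflatedInv G E * G = G - E * (Eᴴ * G⁻¹ * E)⁻¹ * Eᴴ := by
  rw [Matrix.mul_assoc, deflatedInv_mul hG, Matrix.mul_sub, Matrix.mul_one]
  simp only [← Matrix.mul_assoc]
  rw [mul_nonsing_inv _ hG, Matrix.one_mul]

lemma deflatedInv_mul_mul_deflatedInv (hG : IsUnit G.det) (hc : IsUnit (Eᴴ * G⁻¹ * E).det) :
    deflatedInv G E * G * deflatedInv G E = deflatedInv G E := by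
  rw [deflatedInv_mul hG, Matrix.sub_mul, Matrix.one_mul, Matrix.mul_assoc _ Eᴴ,
    conjTranspose_mul_deflatedInv hc, Matrix.mul_zero, sub_zero]

lemma IsHermitian.deflatedInv (hG : G.IsHermitian) : (deflatedInv G E).IsHermitian := by
  have hc : (Eᴴ * G⁻¹ * E).IsHermitian := isHermitian_conjTranspose_mul_mul E hG.inv
  simp only [IsHermitian, Matrix.deflatedInv, conjTranspose_sub, conjTranspose_mul,
    hG.inv.eq, hc.inv.eq, conjTranspose_conjTranspose]
  simp only [Matrix.mul_assoc]

lemma conjTranspose_deflatedInv_mul_mul (hG : G.IsHermitian) (hGu : IsUnit G.det)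
    (hc : IsUnit (Eᴴ * G⁻¹ * E).det) :
    (deflatedInv G E * G)ᴴ * G * (deflatedInv G E * G) = G - E * (Eᴴ * G⁻¹ * E)⁻¹ * Eᴴ := by
  rw [conjTranspose_mul, hG.eq, hG.deflatedInv.eq, ← mul_deflatedInv_mul (E := E) hGu]
  simp only [Matrix.mul_assoc]
  rw [← Matrix.mul_assoc (deflatedInv G E) G, ← Matrix.mul_assoc (deflatedInv G E * G),
    deflatedInv_mul_mul_deflatedInv hGu hc]

variable {A : Matrix ι ι 𝕜} {ω : 𝕜}

theorem isUnit_one_sub_smul_deflatedInv_mul_mul (hG : G.PosDef) (hE : Function.Injective E.mulVec)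
    (hA : Aᴴ * G * A = (1 - E * Eᴴ) * G * (1 - E * Eᴴ)) (hB : IsUnit (1 - ω • A))
    (hω : ‖ω‖ ≤ 1) : IsUnit (1 - ω • (deflatedInv G E * G * A)) := by
  have hGu : IsUnit G.det := (isUnit_iff_isUnit_det G).mp hG.isUnit
  have hcpd : (Eᴴ * G⁻¹ * E).PosDef := hG.inv.conjTranspose_mul_mul_same hE
  have hc : IsUnit (Eᴴ * G⁻¹ * E).det := hG.isUnit_det_conjTranspose_mul_inv_mul hE
  rw [← mulVec_injective_iff_isUnit, ← coe_mulVecLin, injective_iff_map_eq_zero]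
  intro v hv
  rw [coe_mulVecLin, sub_mulVec, one_mulVec, smul_mulVec, sub_eq_zero, ← mulVec_mulVec] at hv
  have hEv : Eᴴ *ᵥ v = 0 := by
    rw [hv, mulVec_smul, mulVec_mulVec, ← Matrix.mul_assoc, conjTranspose_mul_deflatedInv hc,
      Matrix.zero_mul, zero_mulVec, smul_zero]
  have hshift : star (A *ᵥ v) ⬝ᵥ (G *ᵥ (A *ᵥ v)) = star v ⬝ᵥ (G *ᵥ v) := by
    have hPv : (1 - E * Eᴴ) *ᵥ v = v := by
      rw [sub_mulVec, one_mulVec, ← mulVec_mulVec, hEv, mulVec_zero, sub_zero]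
    have hP : (1 - E * Eᴴ)ᴴ = 1 - E * Eᴴ := by
      rw [conjTranspose_sub, conjTranspose_one, conjTranspose_mul, conjTranspose_conjTranspose]
    conv_rhs => rw [← hPv]
    rw [star_mulVec_dotProduct_mulVec_mulVec, star_mulVec_dotProduct_mulVec_mulVec, hP, hA]
  have hdefl : star v ⬝ᵥ (G *ᵥ v) = (‖ω‖ ^ 2 : ℝ) * (star (A *ᵥ v) ⬝ᵥ (G *ᵥ (A *ᵥ v)) -
      star (Eᴴ *ᵥ (A *ᵥ v)) ⬝ᵥ ((Eᴴ * G⁻¹ * E)⁻¹ *ᵥ (Eᴴ *ᵥ (A *ᵥ v)))) := by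
    conv_lhs => rw [hv]
    rw [star_smul, mulVec_smul, smul_dotProduct, dotProduct_smul,
      star_mulVec_dotProduct_mulVec_mulVec,
      conjTranspose_deflatedInv_mul_mul hG.isHermitian hGu hc, sub_mulVec, dotProduct_sub,
      star_mulVec_dotProduct_mulVec_mulVec Eᴴ, conjTranspose_conjTranspose, smul_smul,
      smul_eq_mul, RCLike.star_def, RCLike.conj_mul, RCLike.ofReal_pow]
  have hvA : v = ω • (A *ᵥ v) := by
    rcases eq_or_ne ω 0 with rfl | hω0
    · simpa using hv
    have hy : Eᴴ *ᵥ (A *ᵥ v) = 0 := by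
      by_contra hy
      have hβ := RCLike.pos_iff.mp (hcpd.inv.dotProduct_mulVec_pos hy)
      have hα := RCLike.nonneg_iff.mp (hG.posSemidef.dotProduct_mulVec_nonneg (A *ᵥ v))
      have hre := congrArg RCLike.re (hshift.trans hdefl)
      rw [RCLike.re_ofReal_mul, map_sub] at hre
      have ht : 0 < ‖ω‖ ^ 2 := by positivity
      have ht1 : ‖ω‖ ^ 2 ≤ 1 := pow_le_one₀ (norm_nonneg ω) hω
      nlinarith [mul_pos ht hβ.1, mul_nonneg hα.1 (sub_nonneg.mpr ht1)]
    conv_lhs => rw [hv, deflatedInv_mul hGu, sub_mulVec, one_mulVec, ← mulVec_mulVec, hy,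
      mulVec_zero, sub_zero]
  have hBv : (1 - ω • A) *ᵥ v = 0 := by
    rw [sub_mulVec, one_mulVec, smul_mulVec, ← hvA, sub_self]
  exact (mulVec_injective_iff_isUnit.mpr hB) (hBv.trans (mulVec_zero _).symm)

variable {F : Matrix κ ι 𝕜}

lemma one_sub_smul_deflatedInv_mul_mul_mul (hG : IsUnit G.det) (hc : IsUnit (Eᴴ * G⁻¹ * E).det)
    (hB : IsUnit (1 - ω • A)) (hF : F * (1 - ω • A) = Eᴴ) :
    (1 - ω • (deflatedInv G E * G * A)) * ((1 - ω • A)⁻¹ * (G⁻¹ * E)) =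
      G⁻¹ * E * (Eᴴ * G⁻¹ * E)⁻¹ * (F * G⁻¹ * E) := by
  set X := (1 - ω • A)⁻¹ * (G⁻¹ * E)
  have hBX : (1 - ω • A) * X = G⁻¹ * E :=
    mul_nonsing_inv_cancel_left _ _ ((isUnit_iff_isUnit_det _).mp hB)
  have hFX : F * G⁻¹ * E = Eᴴ * X := by
    rw [← hF, Matrix.mul_assoc F (1 - ω • A), hBX, Matrix.mul_assoc]
  have hAX : ω • (A * X) = X - G⁻¹ * E := by
    rw [← hBX, Matrix.sub_mul, Matrix.one_mul, Matrix.smul_mul, sub_sub_cancel]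
  have hNE : deflatedInv G E * G * (G⁻¹ * E) = 0 := by
    rw [Matrix.mul_assoc, ← Matrix.mul_assoc G, mul_nonsing_inv _ hG, Matrix.one_mul,
      deflatedInv_mul_self hc]
  calc (1 - ω • (deflatedInv G E * G * A)) * X
      = X - deflatedInv G E * G * (ω • (A * X)) := by
        rw [Matrix.sub_mul, Matrix.one_mul, Matrix.smul_mul, Matrix.mul_smul, Matrix.mul_assoc]
    _ = (1 - deflatedInv G E * G) * X := by
        rw [hAX, Matrix.mul_sub, hNE, sub_zero, Matrix.sub_mul, Matrix.one_mul]
    _ = G⁻¹ * E * (Eᴴ * G⁻¹ * E)⁻¹ * (F * G⁻¹ * E) := by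
        rw [deflatedInv_mul hG, sub_sub_cancel, hFX]
        simp only [Matrix.mul_assoc]

theorem isUnit_mul_inv_mul (hG : G.PosDef) (hE : Function.Injective E.mulVec)
    (hA : Aᴴ * G * A = (1 - E * Eᴴ) * G * (1 - E * Eᴴ)) (hB : IsUnit (1 - ω • A))
    (hω : ‖ω‖ ≤ 1) (hF : F * (1 - ω • A) = Eᴴ) : IsUnit (F * G⁻¹ * E) := by
  have hGu : IsUnit G.det := (isUnit_iff_isUnit_det G).mp hG.isUnit
  have hMX := one_sub_smul_deflatedInv_mul_mul_mul hGu
    (hG.isUnit_det_conjTranspose_mul_inv_mul hE) hB hF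
  rw [← mulVec_injective_iff_isUnit, ← coe_mulVecLin, injective_iff_map_eq_zero]
  intro x hx
  rw [coe_mulVecLin] at hx
  have hXx : ((1 - ω • A)⁻¹ * (G⁻¹ * E)) *ᵥ x = 0 := by
    refine mulVec_injective_iff_isUnit.mpr
      (isUnit_one_sub_smul_deflatedInv_mul_mul hG hE hA hB hω) ?_
    rw [mulVec_mulVec, hMX, ← mulVec_mulVec, hx, mulVec_zero, mulVec_zero]
  have hEx : E *ᵥ x = 0 := by
    have hBX : (1 - ω • A) * ((1 - ω • A)⁻¹ * (G⁻¹ * E)) = G⁻¹ * E :=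
      mul_nonsing_inv_cancel_left _ _ ((isUnit_iff_isUnit_det _).mp hB)
    rw [← mul_nonsing_inv_cancel_left (A := G) E hGu, ← hBX, ← mulVec_mulVec, ← mulVec_mulVec, hXx,
      mulVec_zero, mulVec_zero]
  exact hE (hEx.trans (mulVec_zero E).symm)

theorem inv_mul_mul_inv_eq (hG : G.PosDef) (hE : Function.Injective E.mulVec)
    (hA : Aᴴ * G * A = (1 - E * Eᴴ) * G * (1 - E * Eᴴ)) (hB : IsUnit (1 - ω • A))
    (hω : ‖ω‖ ≤ 1) (hF : F * (1 - ω • A) = Eᴴ) :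
    G⁻¹ * E * (F * G⁻¹ * E)⁻¹ = (1 - ω • A) * (1 - ω • (deflatedInv G E * G * A))⁻¹ *
      (G⁻¹ * E) * (Eᴴ * G⁻¹ * E)⁻¹ := by
  have hBu : IsUnit (1 - ω • A).det := (isUnit_iff_isUnit_det _).mp hB
  have hM : IsUnit (1 - ω • (deflatedInv G E * G * A)).det :=
    (isUnit_iff_isUnit_det _).mp (isUnit_one_sub_smul_deflatedInv_mul_mul hG hE hA hB hω)
  have hK : IsUnit (F * G⁻¹ * E).det :=
    (isUnit_iff_isUnit_det _).mp (isUnit_mul_inv_mul hG hE hA hB hω hF)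
  have hX : (1 - ω • A)⁻¹ * (G⁻¹ * E) = (1 - ω • (deflatedInv G E * G * A))⁻¹ *
      (G⁻¹ * E * (Eᴴ * G⁻¹ * E)⁻¹) * (F * G⁻¹ * E) := by
    rw [Matrix.mul_assoc, ← one_sub_smul_deflatedInv_mul_mul_mul
      ((isUnit_iff_isUnit_det G).mp hG.isUnit) (hG.isUnit_det_conjTranspose_mul_inv_mul hE) hB hF,
      nonsing_inv_mul_cancel_left _ _ hM]
  calc G⁻¹ * E * (F * G⁻¹ * E)⁻¹
      = (1 - ω • A) * ((1 - ω • A)⁻¹ * (G⁻¹ * E)) * (F * G⁻¹ * E)⁻¹ := by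
        rw [mul_nonsing_inv_cancel_left _ _ hBu]
    _ = _ := by
        rw [hX, ← Matrix.mul_assoc (1 - ω • A), mul_nonsing_inv_cancel_right _ _ hK]
        simp only [Matrix.mul_assoc]

end Matrix

variable {n p : ℕ} {α : Type*}

lemma Am_apply_zero_right (x : Idx n p) (b : Fin p) : Am n p x (0, b) = 0 := by
  simp [Am]

lemma Am_apply_succ_right (x : Idx n p) (j : Fin n) (b : Fin p) :
    Am n p x (j.succ, b) = if x = (j.castSucc, b) then 1 else 0 := by
  obtain ⟨i, a⟩ := x
  simp [Am, Fin.ext_iff, eq_comm]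

lemma mul_Am_apply_zero (M : Matrix α (Idx n p) ℂ) (x : α) (b : Fin p) :
    (M * Am n p) x (0, b) = 0 := by
  simp [mul_apply, Am_apply_zero_right]

lemma mul_Am_apply_succ (M : Matrix α (Idx n p) ℂ) (x : α) (j : Fin n) (b : Fin p) :
    (M * Am n p) x (j.succ, b) = M x (j.castSucc, b) := by
  simp [mul_apply, Am_apply_succ_right]

lemma conjTranspose_Am_mul_apply_zero (M : Matrix (Idx n p) α ℂ) (y : α) (a : Fin p) :
    ((Am n p)ᴴ * M) (0, a) y = 0 := by
  simp [mul_apply, Am_apply_zero_right]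

lemma conjTranspose_Am_mul_apply_succ (M : Matrix (Idx n p) α ℂ) (y : α) (i : Fin n)
    (a : Fin p) : ((Am n p)ᴴ * M) (i.succ, a) y = M (i.castSucc, a) y := by
  simp [mul_apply, Am_apply_succ_right]

lemma one_sub_Ek_mul_conjTranspose :
    1 - Ek n p 0 * (Ek n p 0)ᴴ = diagonal fun x => if x.1 = 0 then 0 else 1 := by
  ext ⟨i, a⟩ ⟨j, b⟩
  by_cases hi : i = 0 <;> by_cases hj : j = 0 <;>
    simp [Ek, mul_apply, one_apply, diagonal_apply, hi, hj, eq_comm]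

lemma BlockToeplitz.conjTranspose_Am_mul_mul_Am {G : Matrix (Idx n p) (Idx n p) ℂ}
    (hT : BlockToeplitz n p G) :
    (Am n p)ᴴ * G * Am n p =
      (1 - Ek n p 0 * (Ek n p 0)ᴴ) * G * (1 - Ek n p 0 * (Ek n p 0)ᴴ) := by
  rw [one_sub_Ek_mul_conjTranspose]
  ext ⟨i, a⟩ ⟨j, b⟩
  cases i using Fin.cases <;> cases j using Fin.cases <;>
    simp [mul_Am_apply_zero, mul_Am_apply_succ, conjTranspose_Am_mul_apply_zero,
      conjTranspose_Am_mul_apply_succ, Fin.succ_ne_zero]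
  exact (hT _ _ _ _).symm

lemma mul_Am_pow_apply_of_lt (M : Matrix α (Idx n p) ℂ) (x : α) :
    ∀ (k : ℕ) (y : Idx n p), (y.1 : ℕ) < k → (M * Am n p ^ k) x y = 0
  | 0, _, hy => absurd hy (Nat.not_lt_zero _)
  | k + 1, (j, b), hy => by
    rw [pow_succ, ← Matrix.mul_assoc]
    cases j using Fin.cases with
    | zero => exact mul_Am_apply_zero _ _ _
    | succ j =>
      rw [mul_Am_apply_succ]
      exact mul_Am_pow_apply_of_lt M x k _ (by simpa using hy)

lemma Am_pow_eq_zero : Am n p ^ (n + 1) = 0 := by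
  ext x y
  simpa using mul_Am_pow_apply_of_lt 1 x (n + 1) y y.1.isLt

lemma Fm_mul_one_sub_smul_Am (ω : ℂ) : Fm n p ω * (1 - ω • Am n p) = (Ek n p 0)ᴴ := by
  ext i ⟨j, b⟩
  rw [Matrix.mul_sub, Matrix.mul_one, Matrix.mul_smul, Matrix.sub_apply, Matrix.smul_apply]
  cases j using Fin.cases with
  | zero => simp [mul_Am_apply_zero, Fm, Ek, eq_comm]
  | succ j => simp [mul_Am_apply_succ, Fm, Ek, pow_succ, mul_comm, Fin.succ_ne_zero]

lemma conjTranspose_Ek_mul_Ek (k : Fin (n + 1)) : (Ek n p k)ᴴ * Ek n p k = 1 := by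
  ext a b
  simp [Ek, mul_apply, one_apply, Fintype.sum_prod_type, ite_and, eq_comm]

lemma mulVec_injective_Ek (k : Fin (n + 1)) : Function.Injective (Ek n p k).mulVec := by
  intro x y h
  simpa [mulVec_mulVec, conjTranspose_Ek_mul_Ek] using congrArg ((Ek n p k)ᴴ *ᵥ ·) h

lemma isUnit_one_sub_smul_Am (ω : ℂ) : IsUnit (1 - ω • Am n p) :=
  IsNilpotent.isUnit_one_sub ⟨n + 1, by rw [smul_pow, Am_pow_eq_zero, smul_zero]⟩

theorem stmt18_general (p n : ℕ)
    (G : Matrix (Idx n p) (Idx n p) ℂ) (hG : G.PosDef) (hT : BlockToeplitz n p G)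
    (om : ℂ) (hom : ‖om‖ ≤ 1) :
    IsUnit (1 - om • (N0m n p G * G * Am n p)) ∧
      G⁻¹ * Ek n p 0 * (Fm n p om * G⁻¹ * Ek n p 0)⁻¹ =
        (1 - om • Am n p) * (1 - om • (N0m n p G * G * Am n p))⁻¹ * (G⁻¹ * Ek n p 0) *
          ((Ek n p 0)ᴴ * G⁻¹ * Ek n p 0)⁻¹ := by
  have hE : Function.Injective (Ek n p 0).mulVec := mulVec_injective_Ek 0
  have hA := hT.conjTranspose_Am_mul_mul_Am
  have hB : IsUnit (1 - om • Am n p) := isUnit_one_sub_smul_Am om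
  exact ⟨isUnit_one_sub_smul_deflatedInv_mul_mul hG hE hA hB hom,
    inv_mul_mul_inv_eq hG hE hA hB hom (Fm_mul_one_sub_smul_Am om)⟩

theorem stmt18 (p n : ℕ) (hp : 0 < p) (hn : 0 < n)
    (G : Matrix (Idx n p) (Idx n p) ℂ) (hG : G.PosDef) (hT : BlockToeplitz n p G)
    (om : ℂ) (hom : ‖om‖ ≤ 1) :
    IsUnit (1 - om • (N0m n p G * G * Am n p)) ∧
      G⁻¹ * Ek n p 0 * (Fm n p om * G⁻¹ * Ek n p 0)⁻¹ =
        (1 - om • Am n p) * (1 - om • (N0m n p G * G * Am n p))⁻¹ * (G⁻¹ * Ek n p 0) *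
          ((Ek n p 0)ᴴ * G⁻¹ * Ek n p 0)⁻¹ :=
  stmt18_general p n G hG hT om hom

end
end
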